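/- arXiv:1405.4712 — 2 statements merged into one kernel-verified Lean document; each statement's English description precedes it below -/
import Mathlib

section
/- Let ν > -1/2 and define λ_ν(x) = ∑_{n≥0} (2n+1) x^{2n} / (4^n · n! · (ν+1)_n). Then λ_ν(x) < cosh x + x·sinh x for all x > 0. -/
/-!
Since `4ⁿ n! (1/2)ₙ = (2n)!` and the Pochhammer symbol is increasing in its argument on `(0, ∞)`,
for `ν + 1 > 1/2` each term of `λ_ν(x)` is at most `(2n+1) x²ⁿ / (2n)!`, strictly so for `n ≥ 1`.
These majorants sum to `cosh x + x sinh x`.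
-/

noncomputable def lam (ν x : ℝ) : ℝ :=
  ∑' n : ℕ, (2 * (n : ℝ) + 1) * x ^ (2 * n) /
    ((4 : ℝ) ^ n * (n.factorial : ℝ) * (ascPochhammer ℝ n).eval (ν + 1))

open scoped Nat

section Monotone

variable {S : Type*} [Semiring S] [PartialOrder S] [IsStrictOrderedRing S]

theorem ascPochhammer_eval_le_eval (n : ℕ) {a b : S} (ha : 0 < a) (hab : a ≤ b) :
    (ascPochhammer S n).eval a ≤ (ascPochhammer S n).eval b := by
  induction n with
  | zero => simp
  | succ n ih =>
    rw [ascPochhammer_succ_eval, ascPochhammer_succ_eval]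
    exact mul_le_mul ih (add_le_add_left hab _) (by positivity)
      ((ascPochhammer_pos n a ha).le.trans ih)

theorem ascPochhammer_eval_lt_eval {n : ℕ} (hn : n ≠ 0) {a b : S} (ha : 0 < a) (hab : a < b) :
    (ascPochhammer S n).eval a < (ascPochhammer S n).eval b := by
  obtain ⟨n, rfl⟩ := Nat.exists_eq_succ_of_ne_zero hn
  rw [ascPochhammer_succ_eval, ascPochhammer_succ_eval]
  exact mul_lt_mul' (ascPochhammer_eval_le_eval n ha hab.le) (add_lt_add_left hab _)
    (by positivity) ((ascPochhammer_pos n a ha).trans_le (ascPochhammer_eval_le_eval n ha hab.le))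

end Monotone

theorem factorial_two_mul_eq_four_pow_mul_factorial_mul_ascPochhammer_half (n : ℕ) :
    ((2 * n)! : ℝ) = 4 ^ n * n ! * (ascPochhammer ℝ n).eval (1 / 2) := by
  induction n with
  | zero => simp
  | succ n ih =>
    rw [show 2 * (n + 1) = 2 * n + 1 + 1 by ring, Nat.factorial_succ, Nat.factorial_succ,
      ascPochhammer_succ_eval, Nat.factorial_succ]
    push_cast
    rw [ih]
    ring

theorem factorial_two_mul_le_four_pow_mul_factorial_mul_ascPochhammer (n : ℕ) {c : ℝ}
    (hc : 1 / 2 ≤ c) : ((2 * n)! : ℝ) ≤ 4 ^ n * n ! * (ascPochhammer ℝ n).eval c := by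
  rw [factorial_two_mul_eq_four_pow_mul_factorial_mul_ascPochhammer_half]
  gcongr
  exact ascPochhammer_eval_le_eval n (by norm_num) hc

theorem factorial_two_mul_lt_four_pow_mul_factorial_mul_ascPochhammer {n : ℕ} (hn : n ≠ 0)
    {c : ℝ} (hc : 1 / 2 < c) : ((2 * n)! : ℝ) < 4 ^ n * n ! * (ascPochhammer ℝ n).eval c := by
  rw [factorial_two_mul_eq_four_pow_mul_factorial_mul_ascPochhammer_half]
  gcongr
  exact ascPochhammer_eval_lt_eval hn (by norm_num) hc

theorem Real.hasSum_cosh_add_mul_sinh (x : ℝ) :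
    HasSum (fun n : ℕ ↦ (2 * (n : ℝ) + 1) * x ^ (2 * n) / (2 * n)!)
      (Real.cosh x + x * Real.sinh x) := by
  have hsinh : HasSum (fun n : ℕ ↦ 2 * (n : ℝ) * x ^ (2 * n) / (2 * n)!) (x * Real.sinh x) := by
    have hshift : (fun n : ℕ ↦ x * (x ^ (2 * n + 1) / (2 * n + 1)!)) =
        fun n : ℕ ↦ 2 * ((n + 1 : ℕ) : ℝ) * x ^ (2 * (n + 1)) / (2 * (n + 1))! := by
      funext n
      rw [show 2 * (n + 1) = 2 * n + 1 + 1 by ring, Nat.factorial_succ (2 * n + 1)]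
      push_cast
      field_simp
      ring
    have := (hasSum_nat_add_iff (f := fun n : ℕ ↦ 2 * (n : ℝ) * x ^ (2 * n) / (2 * n)!) 1).mp
      (hshift ▸ (Real.hasSum_sinh x).mul_left x)
    simpa only [Finset.range_one, Finset.sum_singleton, CharP.cast_eq_zero, mul_zero, zero_mul,
      zero_div, add_zero] using this
  convert (Real.hasSum_cosh x).add hsinh using 2 with n
  ring

theorem stmt_5 (ν : ℝ) (hν : -(1/2) < ν) (x : ℝ) (hx : 0 < x) :
    lam ν x < Real.cosh x + x * Real.sinh x := by
  have hc : 1 / 2 < ν + 1 := by linarith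
  have hpos : ∀ n : ℕ, 0 < (4 : ℝ) ^ n * n ! * (ascPochhammer ℝ n).eval (ν + 1) := fun n ↦ by
    have := ascPochhammer_pos n (ν + 1) (by linarith)
    positivity
  have hmaj := Real.hasSum_cosh_add_mul_sinh x
  rw [lam, ← hmaj.tsum_eq]
  refine Summable.tsum_lt_tsum_of_nonneg (i := 1) (fun n ↦ (div_pos (by positivity) (hpos n)).le)
    (fun n ↦ ?_) ?_ hmaj.summable
  · exact div_le_div_of_nonneg_left (by positivity) (by positivity)
      (factorial_two_mul_le_four_pow_mul_factorial_mul_ascPochhammer n hc.le)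
  · exact div_lt_div_of_pos_left (by positivity) (by positivity)
      (factorial_two_mul_lt_four_pow_mul_factorial_mul_ascPochhammer one_ne_zero hc)
end

section
/- For all ν > 0 and x ∈ ℝ, the reversed Turán-type inequality λ_ν(x)² ≤ λ_{ν-1}(x) · λ_{ν+1}(x) holds, where λ_ν(x) = ∑_{n≥0} (2n+1) x^{2n} / (4^n · n! · (ν+1)_n). -/
/-!
Writing `λ_ν(x) = ∑ cₙ(x) / (ν+1)ₙ` with `cₙ(x) = (2n+1) x²ⁿ / (4ⁿ n!) ≥ 0`, it suffices that
`s ↦ (s)ₙ` is log-concave on `s > 0`, i.e. `(s)ₙ (s+2)ₙ ≤ (s+1)ₙ²`, which holds factor by factor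
since `(s+k)(s+k+2) ≤ (s+k+1)²`. Then the `n`-th term of `λ_ν` squared is at most the product of the
`n`-th terms of `λ_{ν-1}` and `λ_{ν+1}`, and the Cauchy–Schwarz inequality for series concludes.
-/

open Finset Filter

theorem tsum_sq_le_tsum_mul_tsum {ι : Type*} {r f g : ι → ℝ} (hf : ∀ i, 0 ≤ f i)
    (hg : ∀ i, 0 ≤ g i) (hfs : Summable f) (hgs : Summable g) (h : ∀ i, r i ^ 2 ≤ f i * g i) :
    (∑' i, r i) ^ 2 ≤ (∑' i, f i) * ∑' i, g i := by
  by_cases hr : Summable r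
  · exact le_of_tendsto_of_tendsto' (hr.hasSum.pow 2) (Tendsto.mul hfs.hasSum hgs.hasSum)
      fun s => sum_sq_le_sum_mul_sum_of_sq_le_mul s (fun i _ => hf i) (fun i _ => hg i)
        fun i _ => h i
  · rw [tsum_eq_zero_of_not_summable hr, zero_pow two_ne_zero]
    exact mul_nonneg (tsum_nonneg hf) (tsum_nonneg hg)

section Pochhammer

variable {S : Type*} [Semiring S] [PartialOrder S] [IsStrictOrderedRing S]

theorem pow_le_ascPochhammer_eval {s : S} (hs : 0 ≤ s) (n : ℕ) :
    s ^ n ≤ (ascPochhammer S n).eval s := by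
  induction n with
  | zero => simp
  | succ n ih =>
    rw [ascPochhammer_succ_eval, pow_succ]
    exact mul_le_mul ih (le_add_of_nonneg_right n.cast_nonneg) hs ((pow_nonneg hs n).trans ih)

theorem ascPochhammer_eval_nonneg {s : S} (hs : 0 ≤ s) (n : ℕ) :
    0 ≤ (ascPochhammer S n).eval s :=
  (pow_nonneg hs n).trans (pow_le_ascPochhammer_eval hs n)

end Pochhammer

theorem ascPochhammer_eval_mul_eval_add_two_le_sq {S : Type*} [CommRing S] [LinearOrder S]
    [IsStrictOrderedRing S] {s : S} (hs : 0 ≤ s) (n : ℕ) :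
    (ascPochhammer S n).eval s * (ascPochhammer S n).eval (s + 2)
      ≤ (ascPochhammer S n).eval (s + 1) ^ 2 := by
  induction n with
  | zero => simp
  | succ n ih =>
    have hfactor : (s + n) * (s + 2 + n) ≤ (s + 1 + n) ^ 2 := by nlinarith
    simp only [ascPochhammer_succ_eval]
    calc _ = (ascPochhammer S n).eval s * (ascPochhammer S n).eval (s + 2)
            * ((s + n) * (s + 2 + n)) := by ring
      _ ≤ (ascPochhammer S n).eval (s + 1) ^ 2 * (s + 1 + n) ^ 2 :=
          mul_le_mul ih hfactor (by positivity) (sq_nonneg _)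
      _ = _ := by ring

noncomputable def lamTerm (s x : ℝ) (n : ℕ) : ℝ :=
  (2 * (n : ℝ) + 1) * x ^ (2 * n) /
    ((4 : ℝ) ^ n * (n.factorial : ℝ) * (ascPochhammer ℝ n).eval s)

theorem lam_eq_tsum_lamTerm (ν x : ℝ) : lam ν x = ∑' n, lamTerm (ν + 1) x n := rfl

section lamTerm

variable {s : ℝ} (x : ℝ) (n : ℕ)

theorem lamTerm_nonneg (hs : 0 ≤ s) : 0 ≤ lamTerm s x n := by
  unfold lamTerm
  have := ascPochhammer_eval_nonneg hs n
  have : 0 ≤ x ^ (2 * n) := by rw [pow_mul]; positivity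
  positivity

theorem lamTerm_le_pow_div_factorial (hs : 0 < s) :
    lamTerm s x n ≤ (3 * x ^ 2 / (4 * s)) ^ n / n.factorial := by
  have hbernoulli : 2 * (n : ℝ) + 1 ≤ 3 ^ n := by
    have := one_add_mul_le_pow (by norm_num : (-2 : ℝ) ≤ 2) n
    norm_num at this
    linarith
  calc lamTerm s x n
      ≤ 3 ^ n * (x ^ 2) ^ n / (4 ^ n * n.factorial * s ^ n) := by
        unfold lamTerm
        rw [pow_mul]
        gcongr
        exact pow_le_ascPochhammer_eval hs.le n
    _ = _ := by
        rw [div_pow, mul_pow, mul_pow]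
        field_simp

theorem summable_lamTerm (hs : 0 < s) : Summable (lamTerm s x) :=
  (Real.summable_pow_div_factorial _).of_nonneg_of_le (lamTerm_nonneg x · hs.le)
    (lamTerm_le_pow_div_factorial x · hs)

theorem lamTerm_add_one_sq_le_mul (hs : 0 < s) :
    lamTerm (s + 1) x n ^ 2 ≤ lamTerm s x n * lamTerm (s + 2) x n := by
  have hP₀ := ascPochhammer_pos n s hs
  have hP₂ := ascPochhammer_pos n (s + 2) (by linarith)
  set c := (2 * (n : ℝ) + 1) * x ^ (2 * n)
  set d := (4 : ℝ) ^ n * n.factorial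
  calc lamTerm (s + 1) x n ^ 2 = c ^ 2 / (d ^ 2 * (ascPochhammer ℝ n).eval (s + 1) ^ 2) := by
        unfold lamTerm; ring
    _ ≤ c ^ 2 / (d ^ 2 * ((ascPochhammer ℝ n).eval s * (ascPochhammer ℝ n).eval (s + 2))) := by
        gcongr
        exact ascPochhammer_eval_mul_eval_add_two_le_sq hs.le n
    _ = lamTerm s x n * lamTerm (s + 2) x n := by
        unfold lamTerm; ring

end lamTerm

theorem stmt_11 (ν : ℝ) (hν : 0 < ν) (x : ℝ) :
    (lam ν x) ^ 2 ≤ lam (ν - 1) x * lam (ν + 1) x := by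
  rw [lam_eq_tsum_lamTerm, lam_eq_tsum_lamTerm, lam_eq_tsum_lamTerm, sub_add_cancel, add_assoc,
    one_add_one_eq_two]
  exact tsum_sq_le_tsum_mul_tsum (lamTerm_nonneg x · hν.le) (lamTerm_nonneg x · (by linarith))
    (summable_lamTerm x hν) (summable_lamTerm x (by linarith)) (lamTerm_add_one_sq_le_mul x · hν)
end
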